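/- Let v1,...,v6 be points in general position in the plane forming a path with straight-line edges e_i = segment v_i v_{i+1}, i = 1,...,5. If e_1 crosses e_3, e_1 crosses e_4, e_1 crosses e_5, e_2 crosses e_5, and e_3 crosses e_5, then e_2 crosses e_4. -/
import Mathlib


noncomputable section

/-- A point of the plane. -/
abbrev Pt : Type := ℝ × ℝ

/-- Two straight segments cross: they meet at a point interior to both. -/
def SegCross (p q r s : Pt) : Prop :=
  (openSegment ℝ p q ∩ openSegment ℝ r s).Nonempty

/-- Points in general position: distinct, and no three collinear. -/
def GenPos {V : Type*} (pos : V → Pt) : Prop :=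
  Function.Injective pos ∧
    ∀ a b c : V, a ≠ b → b ≠ c → a ≠ c →
      ¬ Collinear ℝ ({pos a, pos b, pos c} : Set Pt)

/-- The orientation determinant of three points. -/
def dd (a b c : Pt) : ℝ := (b.1-a.1)*(c.2-a.2)-(b.2-a.2)*(c.1-a.1)

lemma dd_comb (u w p q : Pt) (a b : ℝ) (h : a + b = 1) :
    dd u w (a•p + b•q) = a * dd u w p + b * dd u w q := by
  have hb : b = 1 - a := by linarith
  subst hb
  simp only [dd, Prod.fst_add, Prod.snd_add, Prod.smul_fst, Prod.smul_snd, smul_eq_mul]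
  ring

lemma dd_comb1 (p q x : Pt) (a b : ℝ) (h : a + b = 1) :
    dd (a•p + b•q) q x = a * dd p q x := by
  have hb : b = 1 - a := by linarith
  subst hb
  simp only [dd, Prod.fst_add, Prod.snd_add, Prod.smul_fst, Prod.smul_snd, smul_eq_mul]
  ring

lemma dd_cyc (a b c : Pt) : dd a b c = dd b c a := by simp only [dd]; ring
lemma dd_ab_a (a b : Pt) : dd a b a = 0 := by simp only [dd]; ring
lemma dd_ab_b (a b : Pt) : dd a b b = 0 := by simp only [dd]; ring

lemma exists_param {a b x : Pt} (hab : a ≠ b) (h : dd a b x = 0) :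
    ∃ c d : ℝ, c + d = 1 ∧ x = c•a + d•b := by
  have hcomp : a.1 ≠ b.1 ∨ a.2 ≠ b.2 := by
    by_contra hc
    push_neg at hc
    exact hab (Prod.ext hc.1 hc.2)
  simp only [dd] at h
  rcases hcomp with h1 | h2
  · have hne : b.1 - a.1 ≠ 0 := sub_ne_zero.mpr (Ne.symm h1)
    refine ⟨1 - (x.1-a.1)/(b.1-a.1), (x.1-a.1)/(b.1-a.1), by ring, ?_⟩
    apply Prod.ext <;>
      simp only [Prod.fst_add, Prod.snd_add, Prod.smul_fst, Prod.smul_snd, smul_eq_mul] <;>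
      field_simp <;> nlinarith [h]
  · have hne : b.2 - a.2 ≠ 0 := sub_ne_zero.mpr (Ne.symm h2)
    refine ⟨1 - (x.2-a.2)/(b.2-a.2), (x.2-a.2)/(b.2-a.2), by ring, ?_⟩
    apply Prod.ext <;>
      simp only [Prod.fst_add, Prod.snd_add, Prod.smul_fst, Prod.smul_snd, smul_eq_mul] <;>
      field_simp <;> nlinarith [h]

lemma collinear_of_dd {a b c : Pt} (h : dd a b c = 0) :
    Collinear ℝ ({a, b, c} : Set Pt) := by
  by_cases hab : a = b
  · rw [← hab]
    have : ({a, a, c} : Set Pt) = {a, c} := by simp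
    rw [this]
    exact collinear_pair ℝ a c
  · rw [collinear_iff_of_mem (Set.mem_insert a _)]
    refine ⟨b - a, ?_⟩
    intro p hp
    simp only [dd] at h
    have hcomp : b.1 - a.1 ≠ 0 ∨ b.2 - a.2 ≠ 0 := by
      by_contra hc
      push_neg at hc
      exact hab (Prod.ext (by linarith [hc.1]) (by linarith [hc.2])).symm
    rcases hp with rfl | rfl | rfl
    · exact ⟨0, by simp⟩
    · exact ⟨1, by simp⟩
    · rcases hcomp with h1 | h2
      · refine ⟨(p.1 - a.1)/(b.1 - a.1), ?_⟩
        have : ((p.1 - a.1)/(b.1 - a.1)) • (b - a) +ᵥ a = p := by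
          apply Prod.ext <;>
            simp only [vadd_eq_add, Prod.fst_add, Prod.snd_add, Prod.smul_fst,
              Prod.smul_snd, Prod.fst_sub, Prod.snd_sub, smul_eq_mul] <;>
            field_simp <;> nlinarith [h]
        exact this.symm
      · refine ⟨(p.2 - a.2)/(b.2 - a.2), ?_⟩
        have : ((p.2 - a.2)/(b.2 - a.2)) • (b - a) +ᵥ a = p := by
          apply Prod.ext <;>
            simp only [vadd_eq_add, Prod.fst_add, Prod.snd_add, Prod.smul_fst,
              Prod.smul_snd, Prod.fst_sub, Prod.snd_sub, smul_eq_mul] <;>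
            field_simp <;> nlinarith [h]
        exact this.symm

/-- Forward: a crossing forces strict sign separation. -/
lemma cross_sep {p q r s : Pt} (h : SegCross p q r s) (hr : dd p q r ≠ 0) :
    dd p q r * dd p q s < 0 := by
  obtain ⟨x, hx1, hx2⟩ := h
  obtain ⟨a, b, ha, hb, hab, hxe⟩ := hx1
  obtain ⟨c, d, hc, hd, hcd, hxe'⟩ := hx2
  have h0 : dd p q x = 0 := by
    rw [← hxe, dd_comb p q p q a b hab, dd_ab_a, dd_ab_b]; ring
  have h1 : c * dd p q r + d * dd p q s = 0 := by
    rw [← dd_comb p q r s c d hcd, hxe']; exact h0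
  have h1R : c * (dd p q r * dd p q r) + d * (dd p q r * dd p q s) = 0 := by
    linear_combination (dd p q r) * h1
  nlinarith [h1R, mul_pos hc (mul_self_pos.mpr hr), hd]

lemma segCross_symm {p q r s : Pt} (h : SegCross p q r s) : SegCross r s p q := by
  obtain ⟨x, h1, h2⟩ := h; exact ⟨x, h2, h1⟩

/-- Backward: sign separation produces a crossing. -/
lemma cross_of_sep {a b c d : Pt} (hab : a ≠ b)
    (h1 : dd a b c * dd a b d < 0) (h2 : dd c d a * dd c d b < 0) :
    SegCross a b c d := by
  set A := dd a b c with hA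
  set B := dd a b d with hB
  have hAB : A - B ≠ 0 := by
    rcases mul_neg_iff.mp h1 with ⟨h₁, h₂⟩ | ⟨h₁, h₂⟩ <;> intro h0 <;> nlinarith
  set u : ℝ := A / (A - B) with hu
  have hu0 : 0 < u := by
    rcases mul_neg_iff.mp h1 with ⟨h₁, h₂⟩ | ⟨h₁, h₂⟩
    · exact div_pos h₁ (by linarith)
    · exact div_pos_of_neg_of_neg h₁ (by linarith)
  have hu1 : u < 1 := by
    rcases mul_neg_iff.mp h1 with ⟨h₁, h₂⟩ | ⟨h₁, h₂⟩
    · rw [div_lt_one (by linarith)]; linarith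
    · rw [div_lt_one_of_neg (by linarith)]; linarith
  set x : Pt := (1-u)•c + u•d with hx
  have hxcd : x ∈ openSegment ℝ c d :=
    ⟨1-u, u, by linarith, hu0, by ring, rfl⟩
  have hdd0 : dd a b x = 0 := by
    rw [hx, dd_comb a b c d (1-u) u (by ring), ← hA, ← hB, hu]
    field_simp
    ring
  obtain ⟨e, f, hef, hxe⟩ := exists_param hab hdd0
  have hcd0 : dd c d x = 0 := by
    rw [hx, dd_comb c d c d (1-u) u (by ring), dd_ab_a, dd_ab_b]; ring
  have heq : e * dd c d a + f * dd c d b = 0 := by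
    rw [← dd_comb c d a b e f hef, ← hxe]; exact hcd0
  have hf0 : 0 < f := by
    rcases mul_neg_iff.mp h2 with ⟨h₁, h₂⟩ | ⟨h₁, h₂⟩ <;> nlinarith
  have he0 : 0 < e := by
    rcases mul_neg_iff.mp h2 with ⟨h₁, h₂⟩ | ⟨h₁, h₂⟩ <;> nlinarith
  exact ⟨x, ⟨e, f, he0, hf0, hef, hxe.symm⟩, hxcd⟩

lemma sign_lemma1 {a b c : ℝ} (h1 : a*b < 0) (h2 : b*c < 0) : 0 < a*c := by
  nlinarith [mul_pos_of_neg_of_neg h1 h2, mul_self_nonneg b]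

lemma sign_lemma2 {a b c : ℝ} (h1 : a*b < 0) (h2 : 0 < a*c) : b*c < 0 := by
  nlinarith [mul_neg_of_neg_of_pos h1 h2, mul_self_nonneg a]

lemma pos_of_eq {x y z : ℝ} (h : x * y = z) (hy : 0 < y) (hz : 0 < z) : 0 < x := by
  nlinarith [h, hy, hz]

lemma neg_of_eq {x y z : ℝ} (h : x * y = z) (hy : 0 < y) (hz : z < 0) : x < 0 := by
  nlinarith [h, hy, hz]

set_option maxHeartbeats 2000000 in
/-- For a geometric path on `v 0, …, v 5` with edges `eᵢ = segment (v (i-1)) (v i)`: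
if `e₁×e₃`, `e₁×e₄`, `e₁×e₅`, `e₂×e₅` and `e₃×e₅` are crossings, so is `e₂×e₄`. -/
theorem p6_crossing_rule (v : Fin 6 → Pt) (hgen : GenPos v)
    (h13 : SegCross (v 0) (v 1) (v 2) (v 3))
    (h14 : SegCross (v 0) (v 1) (v 3) (v 4))
    (h15 : SegCross (v 0) (v 1) (v 4) (v 5))
    (h25 : SegCross (v 1) (v 2) (v 4) (v 5))
    (h35 : SegCross (v 2) (v 3) (v 4) (v 5)) :
    SegCross (v 1) (v 2) (v 3) (v 4) := by
  obtain ⟨hinj, hnc⟩ := hgen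
  have hdd : ∀ i j k : Fin 6, i ≠ j → j ≠ k → i ≠ k → dd (v i) (v j) (v k) ≠ 0 := by
    intro i j k hij hjk hik h0
    exact hnc i j k hij hjk hik (collinear_of_dd h0)
  have A2ne : dd (v 0) (v 1) (v 2) ≠ 0 := hdd 0 1 2 (by decide) (by decide) (by decide)
  have A3ne : dd (v 0) (v 1) (v 3) ≠ 0 := hdd 0 1 3 (by decide) (by decide) (by decide)
  have A4ne : dd (v 0) (v 1) (v 4) ≠ 0 := hdd 0 1 4 (by decide) (by decide) (by decide)
  have B4ne : dd (v 1) (v 2) (v 4) ≠ 0 := hdd 1 2 4 (by decide) (by decide) (by decide)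
  have C1ne : dd (v 3) (v 4) (v 1) ≠ 0 := hdd 3 4 1 (by decide) (by decide) (by decide)
  have C2ne : dd (v 3) (v 4) (v 2) ≠ 0 := hdd 3 4 2 (by decide) (by decide) (by decide)
  have C5ne : dd (v 3) (v 4) (v 5) ≠ 0 := hdd 3 4 5 (by decide) (by decide) (by decide)
  have D0ne : dd (v 4) (v 5) (v 0) ≠ 0 := hdd 4 5 0 (by decide) (by decide) (by decide)
  have D1ne : dd (v 4) (v 5) (v 1) ≠ 0 := hdd 4 5 1 (by decide) (by decide) (by decide)
  have D2ne : dd (v 4) (v 5) (v 2) ≠ 0 := hdd 4 5 2 (by decide) (by decide) (by decide)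
  have D3ne : dd (v 4) (v 5) (v 3) ≠ 0 := hdd 4 5 3 (by decide) (by decide) (by decide)
  -- hypothesis sign products
  have K1 : dd (v 0) (v 1) (v 2) * dd (v 0) (v 1) (v 3) < 0 := cross_sep h13 A2ne
  have K3 : dd (v 0) (v 1) (v 3) * dd (v 0) (v 1) (v 4) < 0 := cross_sep h14 A3ne
  have K6 : dd (v 4) (v 5) (v 0) * dd (v 4) (v 5) (v 1) < 0 :=
    cross_sep (segCross_symm h15) D0ne
  have K8 : dd (v 4) (v 5) (v 1) * dd (v 4) (v 5) (v 2) < 0 :=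
    cross_sep (segCross_symm h25) D1ne
  have K10 : dd (v 4) (v 5) (v 2) * dd (v 4) (v 5) (v 3) < 0 :=
    cross_sep (segCross_symm h35) D2ne
  -- intersection points:  R = e1 ∩ e5
  obtain ⟨R, hR1, hR5⟩ := h15
  obtain ⟨ta, tb, hta, htb, htab, hRe⟩ := hR1
  obtain ⟨sa, sb, hsa, hsb, hsab, hRe5⟩ := hR5
  -- P = e1 ∩ e4
  obtain ⟨P, hP1, hP4⟩ := h14
  obtain ⟨pa, pb, hpa, hpb, hpab, hPe⟩ := hP1
  obtain ⟨la, lb, hla, hlb, hlab, hPe4⟩ := hP4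
  -- Q = e2 ∩ e5
  obtain ⟨Q, hQ2, hQ5⟩ := h25
  obtain ⟨qa, qb, hqa, hqb, hqab, hQe⟩ := hQ2
  obtain ⟨ra, rb, hra, hrb, hrab, hQe5⟩ := hQ5
  -- S = e3 ∩ e5
  obtain ⟨S, hS3, hS5⟩ := h35
  obtain ⟨ca, cb, hca, hcb, hcab, hSe⟩ := hS3
  obtain ⟨na, nb, hna, hnb, hnab, hSe5⟩ := hS5
  -- affine evaluations of dd along the four relevant lines
  have E1 : sa * dd (v 0) (v 1) (v 4) + sb * dd (v 0) (v 1) (v 5) = 0 := by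
    rw [← dd_comb _ _ _ _ sa sb hsab, hRe5, ← hRe,
      dd_comb _ _ _ _ ta tb htab, dd_ab_a, dd_ab_b]; ring
  have E2 : ra * dd (v 0) (v 1) (v 4) + rb * dd (v 0) (v 1) (v 5)
      = qb * dd (v 0) (v 1) (v 2) := by
    rw [← dd_comb _ _ _ _ ra rb hrab, hQe5, ← hQe,
      dd_comb _ _ _ _ qa qb hqab, dd_ab_b]; ring
  have E3 : ra * dd (v 1) (v 2) (v 4) + rb * dd (v 1) (v 2) (v 5) = 0 := by
    rw [← dd_comb _ _ _ _ ra rb hrab, hQe5, ← hQe,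
      dd_comb _ _ _ _ qa qb hqab, dd_ab_a, dd_ab_b]; ring
  have E4 : sa * dd (v 1) (v 2) (v 4) + sb * dd (v 1) (v 2) (v 5)
      = ta * dd (v 1) (v 2) (v 0) := by
    rw [← dd_comb _ _ _ _ sa sb hsab, hRe5, ← hRe,
      dd_comb _ _ _ _ ta tb htab, dd_ab_a]; ring
  have E5 : pa * dd (v 3) (v 4) (v 0) + pb * dd (v 3) (v 4) (v 1) = 0 := by
    rw [← dd_comb _ _ _ _ pa pb hpab, hPe, ← hPe4,
      dd_comb _ _ _ _ la lb hlab, dd_ab_a, dd_ab_b]; ring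
  have E6 : ta * dd (v 3) (v 4) (v 0) + tb * dd (v 3) (v 4) (v 1)
      = sb * dd (v 3) (v 4) (v 5) := by
    rw [← dd_comb _ _ _ _ ta tb htab, hRe, ← hRe5,
      dd_comb _ _ _ _ sa sb hsab, dd_ab_b]; ring
  have E7 : ca * dd (v 3) (v 4) (v 2) = nb * dd (v 3) (v 4) (v 5) := by
    have h₁ : dd (v 3) (v 4) S = ca * dd (v 3) (v 4) (v 2) := by
      rw [← hSe, dd_comb _ _ _ _ ca cb hcab, dd_ab_a]; ring
    have h₂ : dd (v 3) (v 4) S = nb * dd (v 3) (v 4) (v 5) := by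
      rw [← hSe5, dd_comb _ _ _ _ na nb hnab, dd_ab_b]; ring
    rw [← h₁, h₂]
  have E8 : ta * dd (v 4) (v 5) (v 0) + tb * dd (v 4) (v 5) (v 1) = 0 := by
    rw [← dd_comb _ _ _ _ ta tb htab, hRe, ← hRe5,
      dd_comb _ _ _ _ sa sb hsab, dd_ab_a, dd_ab_b]; ring
  have E9 : pa * dd (v 4) (v 5) (v 0) + pb * dd (v 4) (v 5) (v 1)
      = la * dd (v 4) (v 5) (v 3) := by
    rw [← dd_comb _ _ _ _ pa pb hpab, hPe, ← hPe4,
      dd_comb _ _ _ _ la lb hlab, dd_ab_a]; ring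
  -- cyclic identification
  have hcyc0 : dd (v 1) (v 2) (v 0) = dd (v 0) (v 1) (v 2) := (dd_cyc _ _ _).symm
  rw [hcyc0] at E4
  -- (i)  dd012 * dd014 > 0
  have hA24 : 0 < dd (v 0) (v 1) (v 2) * dd (v 0) (v 1) (v 4) := sign_lemma1 K1 K3
  -- (ii)  Δ := sb*ra - rb*sa > 0
  have key2 : (sb*ra - rb*sa) * (dd (v 0) (v 1) (v 4) * dd (v 0) (v 1) (v 4))
      = sb * qb * (dd (v 0) (v 1) (v 2) * dd (v 0) (v 1) (v 4)) := by
    linear_combination (dd (v 0) (v 1) (v 4)) * sb * E2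
      - (dd (v 0) (v 1) (v 4)) * rb * E1
  have hΔ : 0 < sb*ra - rb*sa :=
    pos_of_eq key2 (mul_self_pos.mpr A4ne) (mul_pos (mul_pos hsb hqb) hA24)
  -- (iii)  dd012 * dd124 < 0
  have key3 : (dd (v 0) (v 1) (v 2) * dd (v 1) (v 2) (v 4)) * (rb * ta)
      = -((sb*ra - rb*sa) * (dd (v 1) (v 2) (v 4) * dd (v 1) (v 2) (v 4))) := by
    linear_combination (dd (v 1) (v 2) (v 4)) * sb * E3
      - (dd (v 1) (v 2) (v 4)) * rb * E4
  have hA2B4 : dd (v 0) (v 1) (v 2) * dd (v 1) (v 2) (v 4) < 0 :=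
    neg_of_eq key3 (mul_pos hrb hta)
      (neg_lt_zero.mpr (mul_pos hΔ (mul_self_pos.mpr B4ne)))
  -- (v)  dd342 * dd345 > 0
  have hC25 : 0 < dd (v 3) (v 4) (v 2) * dd (v 3) (v 4) (v 5) := by
    have key5 : (dd (v 3) (v 4) (v 2) * dd (v 3) (v 4) (v 5)) * ca
        = nb * (dd (v 3) (v 4) (v 5) * dd (v 3) (v 4) (v 5)) := by
      linear_combination (dd (v 3) (v 4) (v 5)) * E7
    exact pos_of_eq key5 hca (mul_pos hnb (mul_self_pos.mpr C5ne))
  -- (vi)  dd341 * dd345 < 0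
  have hC15 : dd (v 3) (v 4) (v 1) * dd (v 3) (v 4) (v 5) < 0 := by
    by_contra hcon
    push_neg at hcon
    have hne : dd (v 3) (v 4) (v 1) * dd (v 3) (v 4) (v 5) ≠ 0 := mul_ne_zero C1ne C5ne
    have hpos : 0 < dd (v 3) (v 4) (v 1) * dd (v 3) (v 4) (v 5) :=
      lt_of_le_of_ne hcon (Ne.symm hne)
    have w1 : (pa*tb - ta*pb) * (dd (v 3) (v 4) (v 1) * dd (v 3) (v 4) (v 1))
        = pa * sb * (dd (v 3) (v 4) (v 1) * dd (v 3) (v 4) (v 5)) := by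
      linear_combination (dd (v 3) (v 4) (v 1)) * pa * E6
        - (dd (v 3) (v 4) (v 1)) * ta * E5
    have hΓ : 0 < pa*tb - ta*pb :=
      pos_of_eq w1 (mul_self_pos.mpr C1ne) (mul_pos (mul_pos hpa hsb) hpos)
    have w2 : (dd (v 4) (v 5) (v 0) * dd (v 4) (v 5) (v 3)) * (pa*tb - ta*pb)
        = tb * la * (dd (v 4) (v 5) (v 3) * dd (v 4) (v 5) (v 3)) := by
      linear_combination (dd (v 4) (v 5) (v 3)) * tb * E9
        - (dd (v 4) (v 5) (v 3)) * pb * E8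
    have hD03 : 0 < dd (v 4) (v 5) (v 0) * dd (v 4) (v 5) (v 3) :=
      pos_of_eq w2 hΓ (mul_pos (mul_pos htb hla) (mul_self_pos.mpr D3ne))
    have hD02 : 0 < dd (v 4) (v 5) (v 0) * dd (v 4) (v 5) (v 2) := sign_lemma1 K6 K8
    have hD20 : 0 < dd (v 4) (v 5) (v 2) * dd (v 4) (v 5) (v 0) := by linarith [hD02, mul_comm (dd (v 4) (v 5) (v 0)) (dd (v 4) (v 5) (v 2)) ▸ hD02]
    have hfin : dd (v 4) (v 5) (v 3) * dd (v 4) (v 5) (v 0) < 0 := sign_lemma2 K10 hD20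
    linarith [hfin, hD03, mul_comm (dd (v 4) (v 5) (v 0)) (dd (v 4) (v 5) (v 3)) ▸ hD03]
  -- (vii)  dd341 * dd342 < 0
  have hC12 : dd (v 3) (v 4) (v 1) * dd (v 3) (v 4) (v 2) < 0 := by
    have h1 : dd (v 3) (v 4) (v 5) * dd (v 3) (v 4) (v 1) < 0 := by
      have := mul_comm (dd (v 3) (v 4) (v 1)) (dd (v 3) (v 4) (v 5)) ▸ hC15
      linarith
    have h2 : 0 < dd (v 3) (v 4) (v 5) * dd (v 3) (v 4) (v 2) := by
      have := mul_comm (dd (v 3) (v 4) (v 2)) (dd (v 3) (v 4) (v 5)) ▸ hC25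
      linarith
    exact sign_lemma2 h1 h2
  -- condition A : the line through v1 v2 separates P and v4
  have eqP12 : dd (v 1) (v 2) P = pa * dd (v 0) (v 1) (v 2) := by
    rw [← hPe, dd_comb _ _ _ _ pa pb hpab, dd_ab_a, ← hcyc0]; ring
  have condA : dd (v 1) (v 2) P * dd (v 1) (v 2) (v 4) < 0 := by
    rw [eqP12]
    have := mul_neg_of_pos_of_neg hpa hA2B4
    linarith [this, mul_assoc pa (dd (v 0) (v 1) (v 2)) (dd (v 1) (v 2) (v 4)) ▸ this]
  -- condition B : the line through P v4 (= line v3 v4) separates v1 and v2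
  have eqPL : ∀ x : Pt, dd P (v 4) x = la * dd (v 3) (v 4) x := by
    intro x
    rw [← hPe4, dd_comb1 _ _ _ la lb hlab]
  have condB : dd P (v 4) (v 1) * dd P (v 4) (v 2) < 0 := by
    rw [eqPL, eqPL]
    have h := mul_neg_of_pos_of_neg (mul_pos hla hla) hC12
    have he : la * la * (dd (v 3) (v 4) (v 1) * dd (v 3) (v 4) (v 2))
        = la * dd (v 3) (v 4) (v 1) * (la * dd (v 3) (v 4) (v 2)) := by ring
    linarith [he ▸ h]
  -- v1 ≠ v2
  have h12ne : v 1 ≠ v 2 := by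
    intro h
    have := hinj h
    simp at this
  -- the crossing of e2 with the segment (P, v4) ⊆ open e4
  obtain ⟨x, hx12, hxP4⟩ := cross_of_sep h12ne condA condB
  refine ⟨x, hx12, ?_⟩
  obtain ⟨α, β, hα, hβ, hαβ, hxe⟩ := hxP4
  refine ⟨α*la, α*lb + β, mul_pos hα hla, by positivity, by linear_combination α * hlab + hαβ, ?_⟩
  rw [← hxe, ← hPe4]
  module

end
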